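/- arXiv:2407.01344 — 3 statements merged into one kernel-verified Lean document; each statement's English description precedes it below -/
import Mathlib

section
/- Let Θ ⊆ ℝ^n be a nonempty closed convex set, P : Θ → 𝒫(ℝ^m) a map assigning to each decision a Borel probability measure, ℓ : ℝ^m × ℝ^n → ℝ a loss, r : ℝ^n → ℝ a differentiable regularizer, and define J_η(θ) := ∫ ℓ(z,θ) dP(η)(z) + r(θ). Assume: (i) for every z, θ ↦ ℓ(z,θ) is differentiable and γ-strongly convex on Θ; (ii) r is ρ-strongly convex on Θ and γ + ρ > 0; (iii) ℓ is β-jointly smooth, i.e., ‖∇_θℓ(z,θ) − ∇_θℓ(z,θ')‖ ≤ β‖θ − θ'‖ and ‖∇_θℓ(z,θ) − ∇_θℓ(z',θ)‖ ≤ β‖z − z'‖ for all θ, θ' ∈ Θ and z, z' ∈ ℝ^m; (iv) for each η ∈ Θ and θ ∈ Θ, z ↦ ℓ(z,θ) and z ↦ ∇_θℓ(z,θ) are P(η)-integrable and θ ↦ ∫ ℓ(z,θ) dP(η)(z) is differentiable with gradient ∫ ∇_θℓ(z,θ) dP(η)(z); (v) P is ε-sensitive in Kantorovich dual form: for every L ≥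 0, every L-Lipschitz function g : ℝ^m → ℝ^n, and all η, η' ∈ Θ, ‖∫ g dP(η) − ∫ g dP(η')‖ ≤ εL‖η − η'‖. If for each η ∈ Θ, G(η) ∈ Θ minimizes θ ↦ J_η(θ) over Θ, then for all η, η' ∈ Θ: ‖G(η) − G(η')‖ ≤ (εβ/(γ+ρ))‖η − η'‖. -/
open MeasureTheory
open scoped RealInnerProductSpace

/-! The risk `J_η` is `(γ + ρ)`-strongly convex, so its gradient is strongly monotone:
`(γ + ρ)‖G η - G η'‖² ≤ ⟪∇J_η (G η) - ∇J_η (G η'), G η - G η'⟫`. The first-order optimality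
conditions of `G η` for `J_η` and of `G η'` for `J_η'` let one replace `∇J_η (G η)` by
`∇J_η' (G η')` in this inequality, whence
`(γ + ρ)‖G η - G η'‖ ≤ ‖∇J_η' (G η') - ∇J_η (G η')‖`. The two gradients differ only in the
distribution against which the `β`-Lipschitz map `z ↦ ∇_θ ℓ(z, G η')` is integrated, so
`ε`-sensitivity bounds this by `εβ‖η - η'‖`. -/

section StrongConvexity

variable {E : Type*} [NormedAddCommGroup E] [InnerProductSpace ℝ E] {s : Set E}

theorem StrongConvexOn.add {f g : E → ℝ} {m n : ℝ} (hf : StrongConvexOn s m f)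
    (hg : StrongConvexOn s n g) : StrongConvexOn s (m + n) (f + g) := by
  have hφ : (fun r : ℝ => (m + n) / 2 * r ^ 2) =
      (fun r => m / 2 * r ^ 2) + fun r => n / 2 * r ^ 2 := by
    ext r
    simp only [Pi.add_apply]
    ring
  rw [StrongConvexOn, hφ]
  exact UniformConvexOn.add hf hg

theorem UniformConvexOn.integral {α : Type*} [MeasurableSpace α] {μ : Measure α}
    [IsProbabilityMeasure μ] {φ : ℝ → ℝ} {F : α → E → ℝ}
    (hF : ∀ z, UniformConvexOn s φ (F z)) (hint : ∀ x ∈ s, Integrable (fun z => F z x) μ) :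
    UniformConvexOn s φ (fun x => ∫ z, F z x ∂μ) := by
  obtain ⟨z₀⟩ := nonempty_of_isProbabilityMeasure μ
  refine ⟨(hF z₀).1, fun x hx y hy a b ha hb hab => ?_⟩
  have hint_x : Integrable (fun z => a • F z x) μ := (hint x hx).smul a
  have hint_y : Integrable (fun z => b • F z y) μ := (hint y hy).smul b
  have hint_comb : Integrable (fun z => a • F z x + b • F z y) μ := hint_x.add hint_y
  have h : ∫ z, F z (a • x + b • y) ∂μ ≤ ∫ z, (a • F z x + b • F z y - a * b * φ ‖x - y‖) ∂μ :=
    integral_mono (hint _ ((hF z₀).1 hx hy ha hb hab))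
    (hint_comb.sub (integrable_const (a * b * φ ‖x - y‖))) fun z => (hF z).2 hx hy ha hb hab
  rwa [integral_sub hint_comb (integrable_const _), integral_add hint_x hint_y, integral_smul,
    integral_smul, integral_const, probReal_univ, one_smul] at h

variable [CompleteSpace E] {f f' : E → ℝ} {m : ℝ} {x y g gx gy : E}

theorem HasGradientAt.add {f₁ f₂ : E → ℝ} {g₁ g₂ : E} (h₁ : HasGradientAt f₁ g₁ x)
    (h₂ : HasGradientAt f₂ g₂ x) : HasGradientAt (fun y => f₁ y + f₂ y) (g₁ + g₂) x := by
  rw [hasGradientAt_iff_hasFDerivAt, map_add]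
  exact h₁.hasFDerivAt.add h₂.hasFDerivAt

theorem HasGradientAt.sub {f₁ f₂ : E → ℝ} {g₁ g₂ : E} (h₁ : HasGradientAt f₁ g₁ x)
    (h₂ : HasGradientAt f₂ g₂ x) : HasGradientAt (fun y => f₁ y - f₂ y) (g₁ - g₂) x := by
  rw [hasGradientAt_iff_hasFDerivAt, map_sub]
  exact h₁.hasFDerivAt.sub h₂.hasFDerivAt

theorem hasGradientAt_half_mul_norm_sq (m : ℝ) (x : E) :
    HasGradientAt (fun y : E => m / 2 * ‖y‖ ^ 2) (m • x) x := by
  rw [hasGradientAt_iff_hasFDerivAt]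
  refine ((hasStrictFDerivAt_norm_sq x).hasFDerivAt.const_mul (m / 2)).congr_fderiv ?_
  ext v
  simp [InnerProductSpace.toDual_apply_apply]
  ring

theorem IsMinOn.inner_gradient_nonneg (hs : Convex ℝ s) (hx : x ∈ s) (hy : y ∈ s)
    (hmin : IsMinOn f s x) (hg : HasGradientAt f g x) : 0 ≤ ⟪g, y - x⟫ :=
  hmin.localize.hasFDerivWithinAt_nonneg hg.hasFDerivAt.hasFDerivWithinAt
    (sub_mem_posTangentConeAt_of_segment_subset (hs.segment_subset hx hy))

theorem ConvexOn.inner_gradient_le_sub (hf : ConvexOn ℝ s f) (hx : x ∈ s) (hy : y ∈ s)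
    (hg : HasGradientAt f g x) : ⟪g, y - x⟫ ≤ f y - f x := by
  set L : ℝ →ᵃ[ℝ] E := AffineMap.lineMap x y
  have hderiv : HasDerivAt (f ∘ L) ⟪g, y - x⟫ 0 := by
    have hg' := hg.hasFDerivAt
    rw [← AffineMap.lineMap_apply_zero x y (k := ℝ)] at hg'
    exact hg'.comp_hasDerivAt 0 AffineMap.hasDerivAt_lineMap
  simpa [L, slope_def_field] using
    (hf.comp_affineMap L).le_slope_of_hasDerivAt (by simpa [L] using hx) (by simpa [L] using hy)
      zero_lt_one hderiv

theorem StrongConvexOn.inner_gradient_add_le_sub (hf : StrongConvexOn s m f) (hx : x ∈ s)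
    (hy : y ∈ s) (hg : HasGradientAt f g x) :
    ⟪g, y - x⟫ + m / 2 * ‖y - x‖ ^ 2 ≤ f y - f x := by
  have h := (strongConvexOn_iff_convex.1 hf).inner_gradient_le_sub hx hy
    (hg.sub (hasGradientAt_half_mul_norm_sq m x))
  rw [inner_sub_left, real_inner_smul_left, inner_sub_right x y x, real_inner_self_eq_norm_sq] at h
  rw [norm_sub_sq_real, real_inner_comm x y]
  linarith

theorem StrongConvexOn.mul_norm_sub_sq_le_inner_sub (hf : StrongConvexOn s m f) (hx : x ∈ s)
    (hy : y ∈ s) (hgx : HasGradientAt f gx x) (hgy : HasGradientAt f gy y) :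
    m * ‖x - y‖ ^ 2 ≤ ⟪gx - gy, x - y⟫ := by
  have hxy := hf.inner_gradient_add_le_sub hx hy hgx
  have hyx := hf.inner_gradient_add_le_sub hy hx hgy
  rw [← neg_sub x y, inner_neg_right, norm_neg] at hxy
  rw [inner_sub_left]
  linarith

theorem StrongConvexOn.mul_norm_sub_le_of_isMinOn {g'y : E} (hf : StrongConvexOn s m f)
    (hx : x ∈ s) (hy : y ∈ s) (hxmin : IsMinOn f s x) (hymin : IsMinOn f' s y)
    (hgx : HasGradientAt f gx x) (hgy : HasGradientAt f gy y) (hg'y : HasGradientAt f' g'y y) :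
    m * ‖x - y‖ ≤ ‖g'y - gy‖ := by
  have hoptx := hxmin.inner_gradient_nonneg hf.1 hx hy hgx
  have hopty := hymin.inner_gradient_nonneg hf.1 hy hx hg'y
  have hmono := hf.mul_norm_sub_sq_le_inner_sub hx hy hgx hgy
  have key : m * ‖x - y‖ ^ 2 ≤ ‖g'y - gy‖ * ‖x - y‖ := by
    rw [← neg_sub x y, inner_neg_right] at hoptx
    rw [inner_sub_left] at hmono
    calc m * ‖x - y‖ ^ 2 ≤ ⟪g'y - gy, x - y⟫ := by rw [inner_sub_left]; linarith
      _ ≤ ‖g'y - gy‖ * ‖x - y‖ := real_inner_le_norm _ _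
  rcases (norm_nonneg (x - y)).eq_or_lt with h0 | h0
  · rw [← h0, mul_zero]; positivity
  · rw [sq, ← mul_assoc] at key
    exact le_of_mul_le_mul_right key h0

end StrongConvexity

theorem RRRM_update_contraction_general {n m : ℕ} (γ ρ β ε : ℝ)
    (hβ : 0 ≤ β) (hγρ : 0 < γ + ρ)
    (Θ : Set (EuclideanSpace ℝ (Fin n)))
    (P : EuclideanSpace ℝ (Fin n) → Measure (EuclideanSpace ℝ (Fin m)))
    (hP : ∀ η, IsProbabilityMeasure (P η))
    (ℓ : EuclideanSpace ℝ (Fin m) → EuclideanSpace ℝ (Fin n) → ℝ)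
    (r : EuclideanSpace ℝ (Fin n) → ℝ) (hr : Differentiable ℝ r)
    -- (i) differentiability and γ-strong convexity of the loss in θ
    (hℓsc : ∀ z, ConvexOn ℝ Θ (fun θ => ℓ z θ - γ / 2 * ‖θ‖ ^ 2))
    -- (ii) ρ-strong convexity of the regularizer
    (hrsc : ConvexOn ℝ Θ (fun θ => r θ - ρ / 2 * ‖θ‖ ^ 2))
    -- (iii) β-joint smoothness
    (hsmooth₂ : ∀ θ ∈ Θ, ∀ z z' : EuclideanSpace ℝ (Fin m),
      ‖gradient (fun t => ℓ z t) θ - gradient (fun t => ℓ z' t) θ‖ ≤ β * ‖z - z'‖)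
    -- (iv) integrability and differentiation under the integral sign
    (hint : ∀ η ∈ Θ, ∀ θ ∈ Θ, Integrable (fun z => ℓ z θ) (P η) ∧
      Integrable (fun z => gradient (fun t => ℓ z t) θ) (P η))
    (hgrad : ∀ η ∈ Θ, ∀ θ ∈ Θ,
      HasGradientAt (fun t => ∫ z, ℓ z t ∂(P η))
        (∫ z, gradient (fun t => ℓ z t) θ ∂(P η)) θ)
    -- (v) ε-sensitivity in Kantorovich dual form
    (hsens : ∀ L : ℝ, 0 ≤ L →
      ∀ g : EuclideanSpace ℝ (Fin m) → EuclideanSpace ℝ (Fin n),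
        (∀ z z', ‖g z - g z'‖ ≤ L * ‖z - z'‖) →
        ∀ η ∈ Θ, ∀ η' ∈ Θ,
          ‖(∫ z, g z ∂(P η)) - ∫ z, g z ∂(P η')‖ ≤ ε * L * ‖η - η'‖)
    -- G(η) minimizes J_η over Θ
    (G : EuclideanSpace ℝ (Fin n) → EuclideanSpace ℝ (Fin n))
    (hG : ∀ η ∈ Θ, G η ∈ Θ ∧ ∀ θ ∈ Θ,
      (∫ z, ℓ z (G η) ∂(P η)) + r (G η) ≤ (∫ z, ℓ z θ ∂(P η)) + r θ) :
    ∀ η ∈ Θ, ∀ η' ∈ Θ, ‖G η - G η'‖ ≤ ε * β / (γ + ρ) * ‖η - η'‖ := by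
  intro η hη η' hη'
  obtain ⟨hx, hxmin⟩ := hG η hη
  obtain ⟨hy, hymin⟩ := hG η' hη'
  set J := fun ζ θ => (∫ z, ℓ z θ ∂(P ζ)) + r θ
  set gradJ := fun ζ θ => (∫ z, gradient (fun t => ℓ z t) θ ∂(P ζ)) + gradient r θ
  have hJgrad : ∀ ζ ∈ Θ, ∀ θ ∈ Θ, HasGradientAt (J ζ) (gradJ ζ θ) θ := fun ζ hζ θ hθ =>
    (hgrad ζ hζ θ hθ).add (hr θ).hasGradientAt
  have hJconv : StrongConvexOn Θ (γ + ρ) (J η) :=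
    haveI := hP η
    StrongConvexOn.add (UniformConvexOn.integral (fun z => strongConvexOn_iff_convex.2 (hℓsc z))
      fun θ hθ => (hint η hη θ hθ).1) (strongConvexOn_iff_convex.2 hrsc)
  have hstab : (γ + ρ) * ‖G η - G η'‖ ≤ ‖gradJ η' (G η') - gradJ η (G η')‖ :=
    hJconv.mul_norm_sub_le_of_isMinOn hx hy (isMinOn_iff.2 hxmin) (isMinOn_iff.2 hymin)
      (hJgrad η hη _ hx) (hJgrad η hη _ hy) (hJgrad η' hη' _ hy)
  have hshift : ‖gradJ η' (G η') - gradJ η (G η')‖ ≤ ε * β * ‖η - η'‖ := by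
    rw [add_sub_add_right_eq_sub, norm_sub_rev η η']
    exact hsens β hβ _ (hsmooth₂ _ hy) η' hη' η hη
  rw [div_mul_eq_mul_div, le_div_iff₀ hγρ, mul_comm]
  exact hstab.trans hshift

/-- Theorem 1(a) of the paper: the repeated robust risk minimization update
`G` (the minimizer over `Θ` of the decoupled risk
`J_η(θ) = ∫ ℓ(z,θ) dP(η)(z) + r(θ)`) is `εβ/(γ+ρ)`-Lipschitz on `Θ`.
Here `γ`-strong convexity of `f` on `Θ` means convexity of
`θ ↦ f θ - γ/2 * ‖θ‖²` on `Θ`, and the distribution map `P` is `ε`-sensitive in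
the Kantorovich dual form. -/
theorem RRRM_update_contraction {n m : ℕ} (γ ρ β ε : ℝ)
    (hβ : 0 ≤ β) (hε : 0 ≤ ε) (hγρ : 0 < γ + ρ)
    (Θ : Set (EuclideanSpace ℝ (Fin n))) (hΘne : Θ.Nonempty)
    (hΘcl : IsClosed Θ) (hΘconv : Convex ℝ Θ)
    (P : EuclideanSpace ℝ (Fin n) → Measure (EuclideanSpace ℝ (Fin m)))
    (hP : ∀ η, IsProbabilityMeasure (P η))
    (ℓ : EuclideanSpace ℝ (Fin m) → EuclideanSpace ℝ (Fin n) → ℝ)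
    (r : EuclideanSpace ℝ (Fin n) → ℝ) (hr : Differentiable ℝ r)
    -- (i) differentiability and γ-strong convexity of the loss in θ
    (hℓdiff : ∀ z, Differentiable ℝ (fun θ => ℓ z θ))
    (hℓsc : ∀ z, ConvexOn ℝ Θ (fun θ => ℓ z θ - γ / 2 * ‖θ‖ ^ 2))
    -- (ii) ρ-strong convexity of the regularizer
    (hrsc : ConvexOn ℝ Θ (fun θ => r θ - ρ / 2 * ‖θ‖ ^ 2))
    -- (iii) β-joint smoothness
    (hsmooth₁ : ∀ z, ∀ θ ∈ Θ, ∀ θ' ∈ Θ,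
      ‖gradient (fun t => ℓ z t) θ - gradient (fun t => ℓ z t) θ'‖ ≤ β * ‖θ - θ'‖)
    (hsmooth₂ : ∀ θ ∈ Θ, ∀ z z' : EuclideanSpace ℝ (Fin m),
      ‖gradient (fun t => ℓ z t) θ - gradient (fun t => ℓ z' t) θ‖ ≤ β * ‖z - z'‖)
    -- (iv) integrability and differentiation under the integral sign
    (hint : ∀ η ∈ Θ, ∀ θ ∈ Θ, Integrable (fun z => ℓ z θ) (P η) ∧
      Integrable (fun z => gradient (fun t => ℓ z t) θ) (P η))
    (hgrad : ∀ η ∈ Θ, ∀ θ ∈ Θ,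
      HasGradientAt (fun t => ∫ z, ℓ z t ∂(P η))
        (∫ z, gradient (fun t => ℓ z t) θ ∂(P η)) θ)
    -- (v) ε-sensitivity in Kantorovich dual form
    (hsens : ∀ L : ℝ, 0 ≤ L →
      ∀ g : EuclideanSpace ℝ (Fin m) → EuclideanSpace ℝ (Fin n),
        (∀ z z', ‖g z - g z'‖ ≤ L * ‖z - z'‖) →
        ∀ η ∈ Θ, ∀ η' ∈ Θ,
          ‖(∫ z, g z ∂(P η)) - ∫ z, g z ∂(P η')‖ ≤ ε * L * ‖η - η'‖)
    -- G(η) minimizes J_η over Θ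
    (G : EuclideanSpace ℝ (Fin n) → EuclideanSpace ℝ (Fin n))
    (hG : ∀ η ∈ Θ, G η ∈ Θ ∧ ∀ θ ∈ Θ,
      (∫ z, ℓ z (G η) ∂(P η)) + r (G η) ≤ (∫ z, ℓ z θ ∂(P η)) + r θ) :
    ∀ η ∈ Θ, ∀ η' ∈ Θ, ‖G η - G η'‖ ≤ ε * β / (γ + ρ) * ‖η - η'‖ :=
  RRRM_update_contraction_general γ ρ β ε hβ hγρ Θ P hP ℓ r hr hℓsc hrsc hsmooth₂ hint hgrad hsens G
    hG
end

section
/- Let Θ ⊆ ℝ^n be a nonempty closed convex set, P : Θ → 𝒫(ℝ^m) a map assigning to each decision a Borel probability measure, ℓ : ℝ^m × ℝ^n → ℝ a loss, r : ℝ^n → ℝ a regularizer, and define J_η(θ) := ∫ ℓ(z,θ) dP(η)(z) + r(θ). Assume: (i) for every z, θ ↦ ℓ(z,θ) is γ-strongly convex on Θ; (ii) r is ρ-strongly convex on Θ and γ + ρ > 0; (iii) for every θ ∈ Θ, z ↦ ℓ(z,θ) is L_z-Lipschitz and P(η)-integrable for every η ∈ Θ; (iv) P is ε-sensitive in Kantorovich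 dual form: for every L ≥ 0, every L-Lipschitz function g : ℝ^m → ℝ, and all η, η' ∈ Θ, |∫ g dP(η) − ∫ g dP(η')| ≤ εL‖η − η'‖. Suppose θ_RPS ∈ Θ minimizes θ ↦ J_{θ_RPS}(θ) over Θ, and θ_RPO ∈ Θ minimizes θ ↦ J_θ(θ) over Θ. Then J_{θ_RPS}(θ_RPS) − J_{θ_RPO}(θ_RPO) ≤ 2ε²L_z²/(γ+ρ). -/
open MeasureTheory

/-- Theorem 2 of the paper: the suboptimality of the robust performatively
stable point `θ_RPS` (minimizer over `Θ` of `θ ↦ J_{θ_RPS}(θ)`) relative to the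
robust performatively optimal point `θ_RPO` (minimizer over `Θ` of
`θ ↦ J_θ(θ)`) satisfies `J_{θ_RPS}(θ_RPS) − J_{θ_RPO}(θ_RPO) ≤ 2ε²L_z²/(γ+ρ)`,
where `J_η(θ) = ∫ ℓ(z,θ) dP(η)(z) + r(θ)`. Here `γ`-strong convexity of `f` on
`Θ` means convexity of `θ ↦ f θ - γ/2 * ‖θ‖²` on `Θ`, and the distribution map
`P` is `ε`-sensitive in the Kantorovich dual form. -/
theorem RPS_suboptimality_bound {n m : ℕ} (γ ρ ε Lz : ℝ)
    (hγρ : 0 < γ + ρ) (hε : 0 ≤ ε) (hLz : 0 ≤ Lz)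
    (Θ : Set (EuclideanSpace ℝ (Fin n))) (hΘne : Θ.Nonempty)
    (hΘcl : IsClosed Θ) (hΘconv : Convex ℝ Θ)
    (P : EuclideanSpace ℝ (Fin n) → Measure (EuclideanSpace ℝ (Fin m)))
    (hP : ∀ η, IsProbabilityMeasure (P η))
    (ℓ : EuclideanSpace ℝ (Fin m) → EuclideanSpace ℝ (Fin n) → ℝ)
    (r : EuclideanSpace ℝ (Fin n) → ℝ)
    -- (i) γ-strong convexity of the loss in θ
    (hℓsc : ∀ z, ConvexOn ℝ Θ (fun θ => ℓ z θ - γ / 2 * ‖θ‖ ^ 2))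
    -- (ii) ρ-strong convexity of the regularizer
    (hrsc : ConvexOn ℝ Θ (fun θ => r θ - ρ / 2 * ‖θ‖ ^ 2))
    -- (iii) Lipschitz continuity in z and integrability
    (hLip : ∀ θ ∈ Θ, ∀ z z' : EuclideanSpace ℝ (Fin m),
      |ℓ z θ - ℓ z' θ| ≤ Lz * ‖z - z'‖)
    (hint : ∀ θ ∈ Θ, ∀ η ∈ Θ, Integrable (fun z => ℓ z θ) (P η))
    -- (iv) ε-sensitivity in Kantorovich dual form
    (hsens : ∀ L : ℝ, 0 ≤ L → ∀ g : EuclideanSpace ℝ (Fin m) → ℝ,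
      (∀ z z', |g z - g z'| ≤ L * ‖z - z'‖) →
      ∀ η ∈ Θ, ∀ η' ∈ Θ,
        |(∫ z, g z ∂(P η)) - ∫ z, g z ∂(P η')| ≤ ε * L * ‖η - η'‖)
    -- θ_RPS minimizes J_{θ_RPS} over Θ; θ_RPO minimizes θ ↦ J_θ(θ) over Θ
    (θRPS θRPO : EuclideanSpace ℝ (Fin n))
    (hRPSmem : θRPS ∈ Θ) (hRPOmem : θRPO ∈ Θ)
    (hRPS : ∀ θ ∈ Θ,
      (∫ z, ℓ z θRPS ∂(P θRPS)) + r θRPS ≤ (∫ z, ℓ z θ ∂(P θRPS)) + r θ)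
    (hRPO : ∀ θ ∈ Θ,
      (∫ z, ℓ z θRPO ∂(P θRPO)) + r θRPO ≤ (∫ z, ℓ z θ ∂(P θ)) + r θ) :
    ((∫ z, ℓ z θRPS ∂(P θRPS)) + r θRPS) - ((∫ z, ℓ z θRPO ∂(P θRPO)) + r θRPO) ≤
      2 * ε ^ 2 * Lz ^ 2 / (γ + ρ) := by

  haveI := hP θRPS
  haveI := hP θRPO
  set d := ‖θRPS - θRPO‖ with hd
  have hd0 : 0 ≤ d := norm_nonneg _
  set w := (1/2 : ℝ) • θRPS + (1/2 : ℝ) • θRPO with hw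
  have hwmem : w ∈ Θ := hΘconv hRPSmem hRPOmem (by norm_num) (by norm_num) (by norm_num)
  -- norm identity
  have hnorm : ‖w‖ ^ 2 = ‖θRPS‖ ^ 2 / 2 + ‖θRPO‖ ^ 2 / 2 - d ^ 2 / 4 := by
    have hpar := parallelogram_law_with_norm ℝ θRPS θRPO
    have hws : w = (1/2 : ℝ) • (θRPS + θRPO) := by rw [smul_add]
    rw [hws, norm_smul]
    simp only [norm_div, Real.norm_ofNat, norm_one]
    nlinarith [hpar]
  -- pointwise loss inequality at the midpoint
  have hzpt : ∀ z, ℓ z w ≤ (1/2) * ℓ z θRPS + (1/2) * ℓ z θRPO - γ/8 * d ^ 2 := by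
    intro z
    have h := (hℓsc z).2 hRPSmem hRPOmem (by norm_num : (0:ℝ) ≤ 1/2)
      (by norm_num : (0:ℝ) ≤ 1/2) (by norm_num)
    simp only [smul_eq_mul, ← hw] at h
    rw [hnorm] at h
    ring_nf at h ⊢
    linarith [h]
  -- regularizer inequality at the midpoint
  have hrw : r w ≤ (1/2) * r θRPS + (1/2) * r θRPO - ρ/8 * d ^ 2 := by
    have h := hrsc.2 hRPSmem hRPOmem (by norm_num : (0:ℝ) ≤ 1/2)
      (by norm_num : (0:ℝ) ≤ 1/2) (by norm_num)
    simp only [smul_eq_mul, ← hw] at h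
    rw [hnorm] at h
    ring_nf at h ⊢
    linarith [h]
  set μ := P θRPS with hμ
  have hIx : Integrable (fun z => ℓ z θRPS) μ := hint θRPS hRPSmem θRPS hRPSmem
  have hIy : Integrable (fun z => ℓ z θRPO) μ := hint θRPO hRPOmem θRPS hRPSmem
  have hIw : Integrable (fun z => ℓ z w) μ := hint w hwmem θRPS hRPSmem
  have hJw : (∫ z, ℓ z w ∂μ) ≤ (1/2) * (∫ z, ℓ z θRPS ∂μ) + (1/2) * (∫ z, ℓ z θRPO ∂μ)
      - γ/8 * d ^ 2 := by
    have hI2 : Integrable (fun z => (1/2 : ℝ) * ℓ z θRPS) μ := hIx.const_mul _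
    have hI3 : Integrable (fun z => (1/2 : ℝ) * ℓ z θRPO) μ := hIy.const_mul _
    have hI1 : Integrable (fun z => (1/2 : ℝ) * ℓ z θRPS + (1/2 : ℝ) * ℓ z θRPO) μ :=
      hI2.add hI3
    have h1 : (∫ z, ℓ z w ∂μ) ≤
        ∫ z, ((1/2) * ℓ z θRPS + (1/2) * ℓ z θRPO - γ/8 * d ^ 2) ∂μ :=
      integral_mono hIw (hI1.sub (integrable_const _)) hzpt
    calc (∫ z, ℓ z w ∂μ)
        ≤ ∫ z, ((1/2) * ℓ z θRPS + (1/2) * ℓ z θRPO - γ/8 * d ^ 2) ∂μ := h1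
      _ = (1/2) * (∫ z, ℓ z θRPS ∂μ) + (1/2) * (∫ z, ℓ z θRPO ∂μ) - γ/8 * d ^ 2 := by
          rw [integral_sub hI1 (integrable_const _),
            integral_add hI2 hI3,
            integral_const_mul, integral_const_mul, integral_const]
          simp
  -- strong-convexity gain from minimality of θRPS
  have hmin := hRPS w hwmem
  have hkey : (∫ z, ℓ z θRPS ∂μ) + r θRPS ≤
      (∫ z, ℓ z θRPO ∂μ) + r θRPO - (γ + ρ)/4 * d ^ 2 := by
    linarith [hmin, hJw, hrw]
  -- sensitivity
  have hsen := hsens Lz hLz (fun z => ℓ z θRPO) (hLip θRPO hRPOmem)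
    θRPS hRPSmem θRPO hRPOmem
  have hsen' : (∫ z, ℓ z θRPO ∂μ) ≤ (∫ z, ℓ z θRPO ∂(P θRPO)) + ε * Lz * d := by
    have := abs_le.mp hsen
    linarith [this.2]
  have hfinal : ε * Lz * d - (γ + ρ)/4 * d ^ 2 ≤ 2 * ε ^ 2 * Lz ^ 2 / (γ + ρ) := by
    rw [le_div_iff₀ hγρ]
    nlinarith [sq_nonneg (ε * Lz - (γ + ρ)/2 * d), sq_nonneg d, mul_nonneg hε hLz]
  linarith [hkey, hsen', hfinal]
end

section
/- Let V be a real inner product space, let 𝓛 : ℝ → ℝ be L-Lipschitz with L ≥ 0, let Γ, Ẑ ∈ V, and let λ be a real number with λ ≥ L‖Γ‖. Then sup_{Z ∈ V} ( 𝓛(⟨Γ, Z⟩) − λ‖Z − Ẑ‖ ) = 𝓛(⟨Γ, Ẑ⟩), where ⟨·,·⟩ denotes the inner product of V; in particular, the supremum is attained at Z = Ẑ. -/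
open scoped RealInnerProductSpace

/-- Inner maximization step in the proof of Proposition 2 of the paper: if
`𝓛 : ℝ → ℝ` is `L`-Lipschitz and the multiplier `λ` satisfies `λ ≥ L‖Γ‖`, then
`sup_{Z} (𝓛(⟪Γ, Z⟫) − λ‖Z − Ẑ‖) = 𝓛(⟪Γ, Ẑ⟫)`, the supremum being attained at
`Z = Ẑ`. -/
theorem lipschitz_penalized_sup_collapses {V : Type*} [NormedAddCommGroup V]
    [InnerProductSpace ℝ V] (𝓛 : ℝ → ℝ) (L : ℝ) (hL : 0 ≤ L)
    (hLip : ∀ a b : ℝ, |𝓛 a - 𝓛 b| ≤ L * |a - b|)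
    (Γ Zhat : V) (lam : ℝ) (hlam : L * ‖Γ‖ ≤ lam) :
    IsGreatest (Set.range fun Z : V => 𝓛 ⟪Γ, Z⟫ - lam * ‖Z - Zhat‖)
      (𝓛 ⟪Γ, Zhat⟫) := by
  constructor
  · exact ⟨Zhat, by simp⟩
  · rintro x ⟨Z, rfl⟩
    have h1 : 𝓛 ⟪Γ, Z⟫ - 𝓛 ⟪Γ, Zhat⟫ ≤ L * |⟪Γ, Z⟫ - ⟪Γ, Zhat⟫| :=
      (le_abs_self _).trans (hLip _ _)
    have h2 : |⟪Γ, Z⟫ - ⟪Γ, Zhat⟫| ≤ ‖Γ‖ * ‖Z - Zhat‖ := by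
      rw [← inner_sub_right]
      exact (abs_real_inner_le_norm _ _)
    have h3 : L * |⟪Γ, Z⟫ - ⟪Γ, Zhat⟫| ≤ lam * ‖Z - Zhat‖ :=
      (mul_le_mul_of_nonneg_left h2 hL).trans (by
        rw [← mul_assoc]
        exact mul_le_mul_of_nonneg_right hlam (norm_nonneg _))
    dsimp only
    linarith
end
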